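/- Let A, B ∈ ℝ^{n×n} be such that A is diagonalizable over ℂ, say A = V D V^{−1} with D ∈ ℂ^{n×n} diagonal and V ∈ ℂ^{n×n} invertible, and suppose ker(A) ⊆ ker(B). Then for every nonzero eigenvalue μ ∈ ℂ of A + B we have min over nonzero eigenvalues λ of A of |μ − λ| ≤ cond(V) · ‖B‖, where cond(V) = ‖V‖·‖V^{−1}‖ and ‖·‖ denotes the spectral (operator 2-) norm. -/

import Mathlib

open Matrix Polynomial

/-- The characteristic polynomial of a real matrix, viewed over `ℂ`. Its roots are the
(complex) eigenvalues of the matrix. -/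
noncomputable def charpolyC {ι : Type*} [Fintype ι] [DecidableEq ι]
    (A : Matrix ι ι ℝ) : Polynomial ℂ :=
  (A.charpoly).map (algebraMap ℝ ℂ)

/-- The Euclidean (ℓ²) norm of a finitely supported vector. -/
noncomputable def euclNorm {ι : Type*} [Fintype ι] {𝕜 : Type*} [RCLike 𝕜]
    (v : ι → 𝕜) : ℝ :=
  Real.sqrt (∑ i, ‖v i‖ ^ 2)

/-- The spectral norm (operator 2-norm) of a matrix: the least constant `c ≥ 0` such that
`‖M v‖₂ ≤ c ‖v‖₂` for all vectors `v`. -/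
noncomputable def specNorm {ι κ : Type*} [Fintype ι] [Fintype κ] {𝕜 : Type*} [RCLike 𝕜]
    (M : Matrix ι κ 𝕜) : ℝ :=
  sInf {c : ℝ | 0 ≤ c ∧ ∀ v : κ → 𝕜, euclNorm (M.mulVec v) ≤ c * euclNorm v}

/-! Let `x` be an eigenvector of `A + B` for `μ`, put `y = V⁻¹ x` and let `z` be `y` with the
coordinates where `D` vanishes set to zero. Then `A (V z) = A x`, so `ker A ⊆ ker B` gives
`B (V z) = B x`, and `w = V⁻¹ B V z` satisfies `wᵢ = (μ - dᵢ) yᵢ`. As `μ ≠ 0`, `z ≠ 0`, and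
`‖w‖ ≤ cond(V) ‖B‖ ‖z‖` forces `|μ - dᵢ| ≤ cond(V) ‖B‖` for some `i` with `zᵢ ≠ 0`, hence
`dᵢ ≠ 0`. A real matrix has the same norm bound on complex vectors, by splitting them into real
and imaginary parts. -/

section Norms

open scoped Matrix.Norms.L2Operator

variable {ι κ 𝕜 : Type*} [Fintype ι] [Fintype κ] [RCLike 𝕜]

lemma euclNorm_eq_norm_toLp (v : ι → 𝕜) : euclNorm v = ‖WithLp.toLp 2 v‖ :=
  (EuclideanSpace.norm_eq _).symm

lemma sq_euclNorm (v : ι → 𝕜) : euclNorm v ^ 2 = ∑ i, ‖v i‖ ^ 2 :=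
  Real.sq_sqrt (by positivity)

lemma specNorm_eq_l2_opNorm [DecidableEq κ] (M : Matrix ι κ 𝕜) : specNorm M = ‖M‖ := by
  rw [specNorm, l2_opNorm_def, ContinuousLinearMap.norm_def]
  congr! 4 with c
  rw [(WithLp.equiv 2 (κ → 𝕜)).symm.forall_congr_left]
  simp [euclNorm_eq_norm_toLp, toLpLin_apply]

lemma euclNorm_mulVec_le (M : Matrix ι κ 𝕜) (v : κ → 𝕜) :
    euclNorm (M *ᵥ v) ≤ specNorm M * euclNorm v := by
  classical
  simpa [specNorm_eq_l2_opNorm, euclNorm_eq_norm_toLp] using M.l2_opNorm_mulVec (WithLp.toLp 2 v)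

lemma specNorm_nonneg (M : Matrix ι κ 𝕜) : 0 ≤ specNorm M := by
  classical
  exact specNorm_eq_l2_opNorm M ▸ norm_nonneg M

end Norms

section RealMatrix

variable {ι κ : Type*} [Fintype κ]

lemma re_mulVec_map_ofReal (M : Matrix ι κ ℝ) (v : κ → ℂ) :
    (fun i => ((M.map (algebraMap ℝ ℂ) *ᵥ v) i).re) = M *ᵥ fun j => (v j).re := by
  ext i
  simp [mulVec, dotProduct, Complex.re_sum]

lemma im_mulVec_map_ofReal (M : Matrix ι κ ℝ) (v : κ → ℂ) :
    (fun i => ((M.map (algebraMap ℝ ℂ) *ᵥ v) i).im) = M *ᵥ fun j => (v j).im := by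
  ext i
  simp [mulVec, dotProduct, Complex.im_sum]

lemma sq_euclNorm_eq_re_add_im [Fintype ι] (v : ι → ℂ) :
    euclNorm v ^ 2 = euclNorm (fun i => (v i).re) ^ 2 + euclNorm (fun i => (v i).im) ^ 2 := by
  rw [sq_euclNorm, sq_euclNorm, sq_euclNorm, ← Finset.sum_add_distrib]
  refine Finset.sum_congr rfl fun i _ => ?_
  rw [Complex.sq_norm, Complex.normSq_apply, Real.norm_eq_abs, Real.norm_eq_abs, sq_abs, sq_abs]
  ring

lemma euclNorm_mulVec_map_ofReal_le [Fintype ι] (M : Matrix ι κ ℝ) (v : κ → ℂ) :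
    euclNorm (M.map (algebraMap ℝ ℂ) *ᵥ v) ≤ specNorm M * euclNorm v := by
  refine le_of_sq_le_sq ?_ (mul_nonneg (specNorm_nonneg M) (Real.sqrt_nonneg _))
  rw [sq_euclNorm_eq_re_add_im, re_mulVec_map_ofReal, im_mulVec_map_ofReal, mul_pow,
    sq_euclNorm_eq_re_add_im v, mul_add]
  gcongr <;> rw [← mul_pow] <;>
    exact pow_le_pow_left₀ (Real.sqrt_nonneg _) (euclNorm_mulVec_le M _) 2

lemma specNorm_map_ofReal_le [Fintype ι] (M : Matrix ι κ ℝ) :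
    specNorm (M.map (algebraMap ℝ ℂ)) ≤ specNorm M :=
  csInf_le ⟨0, fun _ hc => hc.1⟩ ⟨specNorm_nonneg M, euclNorm_mulVec_map_ofReal_le M⟩

lemma ker_mulVecLin_map_ofReal_le {ι' : Type*} {A : Matrix ι κ ℝ}
    {B : Matrix ι' κ ℝ} (h : LinearMap.ker A.mulVecLin ≤ LinearMap.ker B.mulVecLin) :
    LinearMap.ker (A.map (algebraMap ℝ ℂ)).mulVecLin ≤
      LinearMap.ker (B.map (algebraMap ℝ ℂ)).mulVecLin := by
  have hker_real (u : κ → ℝ) (hu : A *ᵥ u = 0) : B *ᵥ u = 0 := h hu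
  intro v hv
  rw [LinearMap.mem_ker, mulVecLin_apply] at hv ⊢
  have hre := hker_real _ (by rw [← re_mulVec_map_ofReal, hv]; rfl)
  have him := hker_real _ (by rw [← im_mulVec_map_ofReal, hv]; rfl)
  rw [← re_mulVec_map_ofReal] at hre
  rw [← im_mulVec_map_ofReal] at him
  funext i
  apply Complex.ext
  · exact congrFun hre i
  · exact congrFun him i

end RealMatrix

namespace Matrix

variable {ι : Type*} [Fintype ι] [DecidableEq ι]

lemma exists_mulVec_eq_smul_of_isRoot_charpoly {K : Type*} [Field K] {M : Matrix ι ι K} {μ : K}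
    (h : M.charpoly.IsRoot μ) : ∃ x ≠ 0, M *ᵥ x = μ • x := by
  obtain ⟨x, hx, hx0⟩ := ((Module.End.hasEigenvalue_iff_isRoot_charpoly (toLin' M) μ).2
    (by rwa [charpoly_toLin'])).exists_hasEigenvector
  exact ⟨x, hx0, by simpa using Module.End.mem_eigenspace_iff.1 hx⟩

lemma isRoot_charpoly_of_eq_conj_diagonal {R : Type*} [CommRing R] {A V : Matrix ι ι R}
    {d : ι → R} (hV : IsUnit V.det) (hA : A = V * diagonal d * V⁻¹) (i : ι) :
    A.charpoly.IsRoot (d i) := by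
  rw [hA, show (V * diagonal d * V⁻¹).charpoly = (diagonal d).charpoly from
    charpoly_units_conj (nonsingInvUnit V hV) _, charpoly_diagonal]
  simpa [Polynomial.IsRoot, eval_prod] using Finset.prod_eq_zero (Finset.mem_univ i) (sub_self _)

end Matrix

lemma exists_ne_zero_le_of_euclNorm_le {ι 𝕜 : Type*} [Fintype ι] [RCLike 𝕜] {z w : ι → 𝕜}
    {a : ι → ℝ} {c : ℝ} (hz : z ≠ 0) (h : ∀ i, a i * ‖z i‖ ≤ ‖w i‖)
    (hw : euclNorm w ≤ c * euclNorm z) : ∃ i, z i ≠ 0 ∧ a i ≤ c := by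
  by_contra! hlt
  obtain ⟨i₀, hi₀⟩ := Function.ne_iff.1 hz
  have hz_pos : 0 < euclNorm z := by
    rw [euclNorm_eq_norm_toLp, norm_pos_iff]
    exact fun h => hz (congrArg WithLp.ofLp h)
  have hc : 0 ≤ c := nonneg_of_mul_nonneg_left ((Real.sqrt_nonneg _).trans hw) hz_pos
  have hle (i) : c * ‖z i‖ ≤ ‖w i‖ := by
    by_cases hi : z i = 0
    · simp [hi]
    · exact (mul_le_mul_of_nonneg_right (hlt i hi).le (norm_nonneg _)).trans (h i)
  have hlt₀ : c * ‖z i₀‖ < ‖w i₀‖ :=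
    (mul_lt_mul_of_pos_right (hlt i₀ hi₀) (norm_pos_iff.2 hi₀)).trans_le (h i₀)
  have hsq : (c * euclNorm z) ^ 2 < euclNorm w ^ 2 := by
    rw [mul_pow, sq_euclNorm, sq_euclNorm, Finset.mul_sum]
    refine Finset.sum_lt_sum (fun i _ => ?_) ⟨i₀, Finset.mem_univ _, ?_⟩ <;> rw [← mul_pow]
    · exact pow_le_pow_left₀ (by positivity) (hle i) 2
    · exact pow_lt_pow_left₀ hlt₀ (by positivity) two_ne_zero
  exact hsq.not_ge (pow_le_pow_left₀ (Real.sqrt_nonneg _) hw 2)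

lemma inv_mulVec_mulVec_mulVec_apply_of_ker_le {ι K : Type*} [Fintype ι] [DecidableEq ι]
    [Field K] {A B V : Matrix ι ι K} {d : ι → K} (hV : IsUnit V.det)
    (hA : A = V * diagonal d * V⁻¹) (hker : LinearMap.ker A.mulVecLin ≤ LinearMap.ker B.mulVecLin)
    {μ : K} {x z : ι → K} (hx : (A + B) *ᵥ x = μ • x)
    (hz : diagonal d *ᵥ z = diagonal d *ᵥ (V⁻¹ *ᵥ x)) (i : ι) :
    (V⁻¹ *ᵥ (B *ᵥ (V *ᵥ z))) i = (μ - d i) * (V⁻¹ *ᵥ x) i := by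
  have hVinv (u : ι → K) : V⁻¹ *ᵥ (V *ᵥ u) = u := by
    rw [mulVec_mulVec, nonsing_inv_mul V hV, one_mulVec]
  have hAx : A *ᵥ x = V *ᵥ (diagonal d *ᵥ (V⁻¹ *ᵥ x)) := by
    rw [hA, ← mulVec_mulVec, ← mulVec_mulVec]
  have hAVz : A *ᵥ (V *ᵥ z) = A *ᵥ x := by
    rw [hAx, hA, ← mulVec_mulVec, ← mulVec_mulVec, hVinv, hz]
  have hBVz : B *ᵥ (V *ᵥ z) = B *ᵥ x := by
    have : V *ᵥ z - x ∈ LinearMap.ker B.mulVecLin := hker (by simp [mulVec_sub, hAVz])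
    simpa [mulVec_sub, sub_eq_zero] using this
  have h := congrFun (congrArg (V⁻¹ *ᵥ ·) hx) i
  simp only [add_mulVec, mulVec_add, hAx, hVinv, ← hBVz, mulVec_smul, Pi.add_apply,
    mulVec_diagonal, Pi.smul_apply, smul_eq_mul] at h
  linear_combination h

theorem exists_eigenvalue_norm_sub_le_of_ker_le {ι 𝕜 : Type*} [Fintype ι] [DecidableEq ι]
    [RCLike 𝕜] {A B V : Matrix ι ι 𝕜} {d : ι → 𝕜} (hV : IsUnit V.det)
    (hA : A = V * diagonal d * V⁻¹) (hker : LinearMap.ker A.mulVecLin ≤ LinearMap.ker B.mulVecLin)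
    {μ : 𝕜} (hμ : μ ≠ 0) {x : ι → 𝕜} (hx0 : x ≠ 0) (hx : (A + B) *ᵥ x = μ • x) :
    ∃ i, d i ≠ 0 ∧ ‖μ - d i‖ ≤ specNorm V * specNorm V⁻¹ * specNorm B := by
  set y := V⁻¹ *ᵥ x
  set z : ι → 𝕜 := fun i => if d i = 0 then 0 else y i
  have hdz : diagonal d *ᵥ z = diagonal d *ᵥ y := by
    ext i
    rw [mulVec_diagonal, mulVec_diagonal]
    by_cases hi : d i = 0 <;> simp [z, hi]
  have hw := inv_mulVec_mulVec_mulVec_apply_of_ker_le hV hA hker hx hdz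
  set w := V⁻¹ *ᵥ (B *ᵥ (V *ᵥ z))
  have hz0 : z ≠ 0 := by
    intro hz
    have hy : y = 0 := by
      ext i
      have hwi := hw i
      simp only [w, hz, mulVec_zero, Pi.zero_apply] at hwi
      by_cases hi : d i = 0
      · simpa [hi, hμ] using hwi.symm
      · simpa [z, hi] using congrFun hz i
    have hVy : V *ᵥ y = x := by rw [mulVec_mulVec, mul_nonsing_inv V hV, one_mulVec]
    exact hx0 (by rw [← hVy, hy, mulVec_zero])
  have hnorm : euclNorm w ≤ specNorm V * specNorm V⁻¹ * specNorm B * euclNorm z := calc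
    euclNorm w ≤ specNorm V⁻¹ * euclNorm (B *ᵥ (V *ᵥ z)) := euclNorm_mulVec_le _ _
    _ ≤ specNorm V⁻¹ * (specNorm B * (specNorm V * euclNorm z)) := by
      refine mul_le_mul_of_nonneg_left ((euclNorm_mulVec_le _ _).trans ?_) (specNorm_nonneg _)
      exact mul_le_mul_of_nonneg_left (euclNorm_mulVec_le _ _) (specNorm_nonneg _)
    _ = specNorm V * specNorm V⁻¹ * specNorm B * euclNorm z := by ring
  have hwz (i) : ‖μ - d i‖ * ‖z i‖ ≤ ‖w i‖ := by
    by_cases hi : d i = 0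
    · simp [z, hi]
    · simp [z, y, hi, hw, norm_mul]
  obtain ⟨i, hzi, hi⟩ := exists_ne_zero_le_of_euclNorm_le hz0 hwz hnorm
  exact ⟨i, fun h => hzi (by simp [z, h]), hi⟩

/-- Bauer–Fike-like bound for kernel-preserving perturbations: if `A` is diagonalizable over
`ℂ` as `A = V D V⁻¹` and `ker A ⊆ ker B`, then every nonzero eigenvalue `μ` of `A + B` is
within `cond(V)‖B‖` of some nonzero eigenvalue `λ` of `A`. -/
theorem bauerFike_kernel_preserving {n : ℕ} (A B : Matrix (Fin n) (Fin n) ℝ)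
    (V D : Matrix (Fin n) (Fin n) ℂ) (hD : D.IsDiag) (hV : IsUnit V.det)
    (hdiag : A.map (algebraMap ℝ ℂ) = V * D * V⁻¹)
    (hker : LinearMap.ker A.mulVecLin ≤ LinearMap.ker B.mulVecLin) :
    ∀ μ : ℂ, μ ≠ 0 → (charpolyC (A + B)).IsRoot μ →
      ∃ lam : ℂ, lam ≠ 0 ∧ (charpolyC A).IsRoot lam ∧
        ‖μ - lam‖ ≤ (specNorm V * specNorm V⁻¹) * specNorm B := by
  intro μ hμ hroot
  have hA : A.map (algebraMap ℝ ℂ) = V * diagonal D.diag * V⁻¹ := by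
    rw [hdiag, hD.diagonal_diag]
  obtain ⟨x, hx0, hx⟩ :=
    exists_mulVec_eq_smul_of_isRoot_charpoly (M := (A + B).map (algebraMap ℝ ℂ))
      (by rwa [charpoly_map])
  rw [Matrix.map_add _ (map_add _)] at hx
  obtain ⟨i, hi, hle⟩ :=
    exists_eigenvalue_norm_sub_le_of_ker_le hV hA (ker_mulVecLin_map_ofReal_le hker) hμ hx0 hx
  refine ⟨D.diag i, hi, ?_, hle.trans ?_⟩
  · rw [charpolyC, ← charpoly_map]
    exact isRoot_charpoly_of_eq_conj_diagonal hV hA i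
  · exact mul_le_mul_of_nonneg_left (specNorm_map_ofReal_le B)
      (mul_nonneg (specNorm_nonneg V) (specNorm_nonneg V⁻¹))
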